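/- Let H ≤ N ≤ G with H a p-subgroup of the finite group G. If H satisfies the partial Π-property in G, then H satisfies the partial Π-property in N, where N is a normal subgroup of G. -/

import Mathlib

/-- A subgroup `H` of a finite group `G` satisfies the partial `Π`-property in `G` if
there is a chief series `1 = c 0 < c 1 < ... < c n = G` such that for every chief factor
`c (i+1) / c i`, the index `|G/c i : N_{G/c i}((H ⊔ c i) ⊓ c (i+1) / c i)|`
(which equals `|G : N_G((H ⊔ c i) ⊓ c (i+1))|`) is a `π`-number for
`π = π((H ⊔ c i) ⊓ c (i+1) / c i)`, i.e. all its prime divisors divide the order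
`|(H ⊔ c i) ⊓ c (i+1)| / |c i|` of that intersection. -/
def PartialPiProperty (G : Type) [Group G] (H : Subgroup G) : Prop :=
  ∃ (n : ℕ) (c : ℕ → Subgroup G),
    c 0 = ⊥ ∧ c n = ⊤ ∧
    (∀ i, i ≤ n → (c i).Normal) ∧
    (∀ i, i < n → c i < c (i + 1)) ∧
    (∀ i, i < n → ∀ X : Subgroup G, X.Normal → c i ≤ X → X ≤ c (i + 1) →
      X = c i ∨ X = c (i + 1)) ∧
    (∀ i, i < n → ∀ q : ℕ, q.Prime →
      q ∣ (Subgroup.normalizer (((H ⊔ c i) ⊓ c (i + 1) : Subgroup G) : Set G)).index →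
      q ∣ Nat.card ((H ⊔ c i) ⊓ c (i + 1) : Subgroup G) / Nat.card (c i))

/-!
Intersecting a chief series `(G_i)` of `G` with `N` gives a normal series of `N`, which refines
to a chief series of `N` each of whose factors `U ⋖ V` satisfies `G_i ∩ N ≤ U < V ≤ G_{i+1} ∩ N`
for some `i`. Put `X = HG_i ∩ G_{i+1}` and `K = HU ∩ V`. By Dedekind's law `X/G_i` and `K/U` are
sections of the `p`-group `H`, so `|G : N_G(X)|` is a `p`-number. Since `K = (X ∩ N)U ∩ V`, the
subgroup `N_G(X) ∩ N` normalizes `K`, and as `N ⊴ G` the index `|N : N_N(K)|` divides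
`|N : N_G(X) ∩ N|`, which divides `|G : N_G(X)|`. Finally, if `|N : N_N(K)| ≠ 1` then `K ≠ U`,
so `p` divides `|K/U|`.
-/

theorem exists_monotone_covBy_seq_of_le {α : Type*} [PartialOrder α] [WellFoundedLT α]
    [WellFoundedGT α] {x y : α} (h : x ≤ y) :
    ∃ (f : ℕ → α) (m : ℕ), f 0 = x ∧ f m = y ∧ Monotone f ∧ ∀ i < m, f i ⋖ f (i + 1) := by
  obtain ⟨f, hf0, m, hfm, hf⟩ := exists_covBy_seq_of_wellFoundedLT_wellFoundedGT_of_le h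
  refine ⟨fun i => f (min i m), m, by simpa using hf0, by simpa using hfm,
    monotone_nat_of_le_succ fun i => ?_, fun i hi => ?_⟩
  · rcases lt_or_ge i m with hi | hi
    · simpa [min_eq_left hi.le, min_eq_left (Nat.succ_le_of_lt hi)] using (hf i hi).le
    · simp [min_eq_right hi, min_eq_right (hi.trans i.le_succ)]
  · simpa [min_eq_left hi.le, min_eq_left (Nat.succ_le_of_lt hi)] using hf i hi

theorem exists_covBy_seq_refinement {α : Type*} [PartialOrder α] [WellFoundedLT α]
    [WellFoundedGT α] (a : ℕ → α) (n : ℕ) (ha : ∀ i < n, a i ≤ a (i + 1)) :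
    ∃ (e : ℕ → α) (k : ℕ), e 0 = a 0 ∧ e k = a n ∧
      ∀ j < k, e j ⋖ e (j + 1) ∧ ∃ i < n, a i ≤ e j ∧ e (j + 1) ≤ a (i + 1) := by
  induction n with
  | zero => exact ⟨fun _ => a 0, 0, rfl, rfl, by simp⟩
  | succ n ih =>
    obtain ⟨e, k, he0, hek, he⟩ := ih fun i hi => ha i (by omega)
    obtain ⟨f, m, hf0, hfm, hf_mono, hf⟩ := exists_monotone_covBy_seq_of_le (ha n n.lt_succ_self)
    let g : ℕ → α := fun j => if j < k then e j else f (j - k)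
    have hge : ∀ j ≤ k, g j = e j := by
      intro j hj
      rcases hj.lt_or_eq with hj | rfl
      · simp [g, hj]
      · simp [g, hf0, hek]
    have hgf : ∀ j, k ≤ j → g j = f (j - k) := fun j hj => by simp [g, Nat.not_lt.mpr hj]
    refine ⟨g, k + m, by rw [hge 0 k.zero_le, he0], by simp [hgf, hfm], fun j hj => ?_⟩
    rcases lt_or_ge j k with hjk | hkj
    · obtain ⟨hcov, i, hi, hslot⟩ := he j hjk
      rw [hge j hjk.le, hge (j + 1) hjk]
      exact ⟨hcov, i, by omega, hslot⟩
    · rw [hgf j hkj, hgf (j + 1) (by omega), show j + 1 - k = j - k + 1 by omega]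
      exact ⟨hf _ (by omega), n, n.lt_succ_self, hf0 ▸ hf_mono (Nat.zero_le _),
        hfm ▸ hf_mono (by omega)⟩

namespace Subgroup

variable {G : Type*} [Group G]

theorem normal_sup_inf_assoc_of_le {A C : Subgroup G} (H : Subgroup G) [A.Normal] (h : A ≤ C) :
    (A ⊔ H) ⊓ C = A ⊔ H ⊓ C := by
  apply SetLike.coe_injective
  rw [coe_inf, normal_mul, normal_mul, mul_inf_assoc A H C h]

theorem sup_normal_inf_assoc_of_le {H C : Subgroup G} (A : Subgroup G) [A.Normal] [C.Normal]
    (h : H ≤ C) : (H ⊔ A) ⊓ C = H ⊔ A ⊓ C := by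
  apply SetLike.coe_injective
  rw [coe_inf, mul_normal, mul_normal, mul_inf_assoc H A C h]

theorem subgroupOf_sup_of_normal {H N : Subgroup G} (A : Subgroup G) [A.Normal] [N.Normal]
    (hHN : H ≤ N) : (H ⊔ A).subgroupOf N = H.subgroupOf N ⊔ A.subgroupOf N := by
  rw [← inf_subgroupOf_right (H ⊔ A), sup_normal_inf_assoc_of_le A hHN,
    subgroupOf_sup hHN inf_le_right, inf_subgroupOf_right]

theorem card_div_card_eq_relIndex {U K : Subgroup G} [Finite U] (h : U ≤ K) :
    Nat.card K / Nat.card U = U.relIndex K := by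
  rw [← relIndex_bot_left, ← relIndex_bot_left, ← relIndex_mul_relIndex ⊥ U K bot_le h,
    Nat.mul_div_cancel_left _ (relIndex_bot_left U ▸ Nat.card_pos)]

theorem relIndex_dvd_index_of_normal_right (M N : Subgroup G) [N.Normal] [N.FiniteIndex] :
    M.relIndex N ∣ M.index := by
  have hM : M.relIndex N * N.index = N.relIndex M * M.index := by
    rw [← inf_relIndex_right, relIndex_mul_index inf_le_right, inf_comm,
      ← relIndex_mul_index inf_le_right, inf_relIndex_right]
  refine Nat.dvd_of_mul_dvd_mul_right (Nat.pos_of_ne_zero (FiniteIndex.index_ne_zero (H := N))) ?_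
  rw [hM, mul_comm M.index]
  exact mul_dvd_mul_right (relIndex_dvd_index_of_normal N M) _

theorem normalizer_le_normalizer_sup_inf (A : Subgroup G) {U V : Subgroup G} [U.Normal]
    [V.Normal] :
    normalizer (A : Set G) ≤ normalizer (((A ⊔ U) ⊓ V : Subgroup G) : Set G) :=
  (le_inf normalizer_le_normalizer_sup_normal le_normalizer_of_normal).trans
    inf_normalizer_le_normalizer_inf

section ChiefFactor

variable {H A B N : Subgroup G} [A.Normal] [N.Normal] {U V : Subgroup N}

theorem sup_inf_eq_subgroupOf_sup_inf [U.Normal] (hHN : H ≤ N) (hAU : A.subgroupOf N ≤ U)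
    (hUV : U ≤ V) (hVB : V ≤ B.subgroupOf N) :
    (H.subgroupOf N ⊔ U) ⊓ V = (((H ⊔ A) ⊓ B).subgroupOf N ⊔ U) ⊓ V := by
  apply le_antisymm
  · rw [sup_comm, normal_sup_inf_assoc_of_le _ hUV, sup_comm]
    refine sup_le (le_inf ?_ inf_le_right) (le_inf le_sup_right hUV)
    exact le_sup_of_le_left <| inf_le_inf (subgroupOf_mono N le_sup_left) hVB
  · refine inf_le_inf_right V (sup_le ?_ le_sup_right)
    calc ((H ⊔ A) ⊓ B).subgroupOf N ≤ (H ⊔ A).subgroupOf N := subgroupOf_mono N inf_le_left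
      _ = H.subgroupOf N ⊔ A.subgroupOf N := subgroupOf_sup_of_normal A hHN
      _ ≤ H.subgroupOf N ⊔ U := sup_le_sup_left hAU _

theorem index_normalizer_subgroupOf_sup_inf_dvd [N.FiniteIndex] [U.Normal] [V.Normal]
    (hHN : H ≤ N) (hAU : A.subgroupOf N ≤ U) (hUV : U ≤ V) (hVB : V ≤ B.subgroupOf N) :
    (normalizer (((H.subgroupOf N ⊔ U) ⊓ V : Subgroup N) : Set N)).index ∣
      (normalizer (((H ⊔ A) ⊓ B : Subgroup G) : Set G)).index := by
  rw [sup_inf_eq_subgroupOf_sup_inf hHN hAU hUV hVB]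
  refine (index_dvd_of_le ?_).trans (relIndex_dvd_index_of_normal_right _ N)
  exact (le_normalizer_comap N.subtype).trans (normalizer_le_normalizer_sup_inf _)

end ChiefFactor

end Subgroup

open Subgroup

theorem IsPGroup.exists_relIndex_sup_inf_eq_pow {G : Type*} [Group G] [Finite G] {p : ℕ}
    [Fact p.Prime] {H A B : Subgroup G} [A.Normal] (hH : IsPGroup p H) (hAB : A ≤ B) :
    ∃ m, A.relIndex ((H ⊔ A) ⊓ B) = p ^ m := by
  obtain ⟨n, hn⟩ := IsPGroup.iff_card.mp (hH.to_inf_left (K := B))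
  have hdvd : A.relIndex ((H ⊔ A) ⊓ B) ∣ p ^ n := by
    rw [← hn, sup_comm, normal_sup_inf_assoc_of_le H hAB, relIndex_sup_left]
    exact relIndex_dvd_card _ _
  obtain ⟨m, -, hm⟩ := (Nat.dvd_prime_pow Fact.out).mp hdvd
  exact ⟨m, hm⟩

theorem prime_dvd_card_div_of_dvd_index_normalizer {G : Type*} [Group G] [Finite G] {p : ℕ}
    [Fact p.Prime] {H A B N : Subgroup G} [A.Normal] [N.Normal] {U V : Subgroup N}
    [U.Normal] [V.Normal] (hHN : H ≤ N) (hH : IsPGroup p H) (hAB : A ≤ B)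
    (hAU : A.subgroupOf N ≤ U) (hUV : U ≤ V) (hVB : V ≤ B.subgroupOf N)
    (hPi : ∀ q : ℕ, q.Prime → q ∣ (normalizer (((H ⊔ A) ⊓ B : Subgroup G) : Set G)).index →
      q ∣ Nat.card ((H ⊔ A) ⊓ B : Subgroup G) / Nat.card A)
    {q : ℕ} (hq : q.Prime)
    (hqK : q ∣ (normalizer (((H.subgroupOf N ⊔ U) ⊓ V : Subgroup N) : Set N)).index) :
    q ∣ Nat.card ((H.subgroupOf N ⊔ U) ⊓ V : Subgroup N) / Nat.card U := by
  have hqp : q = p := by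
    have hqX := hPi q hq (hqK.trans (index_normalizer_subgroupOf_sup_inf_dvd hHN hAU hUV hVB))
    obtain ⟨m, hm⟩ := hH.exists_relIndex_sup_inf_eq_pow hAB
    rw [card_div_card_eq_relIndex (le_inf le_sup_right hAB), hm] at hqX
    exact (Nat.prime_dvd_prime_iff_eq hq Fact.out).mp (hq.dvd_of_dvd_pow hqX)
  subst hqp
  have hHN' : IsPGroup q (H.subgroupOf N) := hH.comap_of_injective _ N.subtype_injective
  obtain ⟨m, hm⟩ := hHN'.exists_relIndex_sup_inf_eq_pow hUV
  rw [card_div_card_eq_relIndex (le_inf le_sup_right hUV), hm]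
  refine dvd_pow_self q fun hm0 => hq.ne_one (Nat.dvd_one.mp ?_)
  have hKU : (H.subgroupOf N ⊔ U) ⊓ V = U :=
    le_antisymm (relIndex_eq_one.mp (by rw [hm, hm0, pow_zero])) (le_inf le_sup_right hUV)
  rwa [hKU, normalizer_eq_top_iff.mpr ‹_›, index_top] at hqK

/-- Let `H ≤ N ≤ G` with `N ⊴ G` and `H` a `p`-subgroup of the finite group `G`.
If `H` satisfies the partial `Π`-property in `G`, then `H` satisfies the partial
`Π`-property in `N`. -/
theorem partialPi_of_le_normal (G : Type) [Group G] [Finite G] (p : ℕ) [Fact p.Prime]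
    (H N : Subgroup G) [N.Normal] (hHN : H ≤ N) (hH : IsPGroup p H)
    (h : PartialPiProperty G H) :
    PartialPiProperty ↥N (H.subgroupOf N) := by
  obtain ⟨n, c, hc0, hcn, hnorm, hlt, -, hPi⟩ := h
  let a : ℕ → {K : Subgroup N // K.Normal} := fun i =>
    ⟨(c (min i n)).subgroupOf N, (hnorm _ (min_le_right i n)).subgroupOf N⟩
  have ha : ∀ i < n, (a i).1 = (c i).subgroupOf N ∧ (a (i + 1)).1 = (c (i + 1)).subgroupOf N :=
    fun i hi => by simp [a, min_eq_left hi.le, min_eq_left (Nat.succ_le_of_lt hi)]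
  obtain ⟨e, k, he0, hek, he⟩ := exists_covBy_seq_refinement a n fun i hi => by
    rw [← Subtype.coe_le_coe, (ha i hi).1, (ha i hi).2]
    exact subgroupOf_mono N (hlt i hi).le
  refine ⟨k, fun j => (e j).1, by simp [he0, a, hc0], by simp [hek, a, hcn],
    fun j _ => (e j).2, fun j hj => (he j hj).1.lt, fun j hj X hX hlo hhi => ?_,
    fun j hj q hq => ?_⟩
  · simpa [Subtype.ext_iff] using (he j hj).1.eq_or_eq (c := ⟨X, hX⟩) hlo hhi
  · obtain ⟨hcov, i, hi, hlo, hhi⟩ := he j hj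
    have : (c i).Normal := hnorm i hi.le
    have : (e j).1.Normal := (e j).2
    have : (e (j + 1)).1.Normal := (e (j + 1)).2
    rw [← Subtype.coe_le_coe, (ha i hi).1] at hlo
    rw [← Subtype.coe_le_coe, (ha i hi).2] at hhi
    exact prime_dvd_card_div_of_dvd_index_normalizer hHN hH (hlt i hi).le hlo hcov.le hhi
      (hPi i hi) hq
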